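/- Let Σ = {a, b, a', b'} be a four-letter alphabet with involution given by overline(a) = a', overline(a') = a, overline(b) = b', overline(b') = b, and let κ = 1. Let L₁ = { aⁿ·b·a' : n ≥ 0 } ∪ { aⁿ·b'·a' : n ≥ 0 } and L₂ = { a·b·a'ⁿ : n ≥ 0 } (both regular languages). Then H₁(L₁,L₂) = { aⁱ·b·a'ʲ : i ≥ 1, j ≥ 1 } ∪ { aⁱ·b'·a'ʲ : i ≥ j ≥ 1 }, and this language is not regular. In particular, the hairpin completion of regular languages is not necessarily regular. -/

import Mathlib

/-- A four-letter alphabet `{a, b, a', b'}`. -/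
inductive Letter : Type
  | a : Letter
  | b : Letter
  | a' : Letter
  | b' : Letter
deriving DecidableEq

instance : Fintype Letter :=
  ⟨{.a, .b, .a', .b'}, fun x => by cases x <;> simp⟩

/-- The involution on `Letter`: `a ↔ a'` and `b ↔ b'`. -/
def Letter.bar : Letter → Letter
  | .a => .a'
  | .a' => .a
  | .b => .b'
  | .b' => .b

/-- The antimorphic extension of an involution on letters to words. -/
def ovr {σ : Type} (bar : σ → σ) (w : List σ) : List σ := (w.map bar).reverse

/-- The hairpin completion `H_κ(L₁, L₂)`. -/
def hairpinCompletion {σ : Type} (bar : σ → σ) (κ : ℕ) (L1 L2 : Language σ) :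
    Language σ :=
  { π | ∃ γ α β : List σ,
      π = γ ++ α ++ β ++ ovr bar α ++ ovr bar γ ∧
      κ ≤ α.length ∧
      (γ ++ α ++ β ++ ovr bar α ∈ L1 ∨ α ++ β ++ ovr bar α ++ ovr bar γ ∈ L2) }

/-- `L₁ = a^*·(b|b')·a'`. -/
def exL1 : Language Letter :=
  { w | (∃ n : ℕ, w = List.replicate n .a ++ [.b, .a']) ∨
        (∃ n : ℕ, w = List.replicate n .a ++ [.b', .a']) }

/-- `L₂ = a·b·a'^*`. -/
def exL2 : Language Letter :=
  { w | ∃ n : ℕ, w = [.a, .b] ++ List.replicate n .a' }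

/-!
A hairpin completion with κ = 1 can always be witnessed with |α| = 1: for α = x·α', move α' and
its image into β. In a word of L₁ the letter x then pairs with the final a', so γ is a block of a's
shorter than the a-block of the L₁-word; the involution maps L₂ into words aⁿb'a', so the same
analysis applies to L₂-completions. This gives the description of H₁(L₁, L₂). Since b'a'ʲ lies in
the left quotient of H₁(L₁, L₂) by aⁱ exactly when 1 ≤ j ≤ i, these quotients are pairwise
distinct, and the Myhill–Nerode theorem rules out regularity. L₁ and L₂ are regular because
x*·c·v with c ≠ x has only finitely many left quotients.
-/

namespace List

variable {α : Type*}

theorem replicate_append_cons_self (n : ℕ) (a : α) (l : List α) :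
    replicate n a ++ a :: l = a :: (replicate n a ++ l) := by
  rw [← cons_append, ← replicate_succ, replicate_succ', append_assoc]
  rfl

theorem replicate_append_cons_inj {x c c' : α} {i i' : ℕ} {u u' : List α}
    (hc : c ≠ x) (hc' : c' ≠ x) :
    replicate i x ++ c :: u = replicate i' x ++ c' :: u' ↔ i = i' ∧ c = c' ∧ u = u' := by
  induction i generalizing i' with
  | zero => cases i' <;> simp [replicate_succ, hc]
  | succ i ih => cases i' <;> simp [replicate_succ, ih, hc'.symm]

end List

namespace Language

variable {α : Type*}

theorem isRegular_of_finite_of_leftQuotient_mem {S : Set (Language α)} (hS : S.Finite)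
    {L : Language α} (hL : L ∈ S) (hstep : ∀ K ∈ S, ∀ a, K.leftQuotient [a] ∈ S) :
    L.IsRegular := by
  refine .of_finite_range_leftQuotient (hS.subset ?_)
  rintro _ ⟨x, rfl⟩
  induction x using List.reverseRecOn with
  | nil => exact hL
  | append_singleton x a ih => rw [leftQuotient_append]; exact hstep _ ih a

@[simp]
theorem mem_singleton (u x : List α) : x ∈ ({u} : Language α) ↔ x = u := Iff.rfl

theorem singleton_nil_leftQuotient_singleton (a : α) :
    ({[]} : Language α).leftQuotient [a] = 0 := by
  ext w
  simp [mem_leftQuotient]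

theorem singleton_cons_leftQuotient_singleton [DecidableEq α] (a c : α) (v : List α) :
    ({c :: v} : Language α).leftQuotient [a] = if a = c then {v} else 0 := by
  ext w
  split_ifs with h <;> simp [mem_leftQuotient, h]

def replicateAppend (x : α) (v : List α) : Language α := {u | ∃ n, u = List.replicate n x ++ v}

theorem cons_mem_replicateAppend_cons {x c a : α} {v w : List α} :
    a :: w ∈ replicateAppend x (c :: v) ↔
      (a = x ∧ w ∈ replicateAppend x (c :: v)) ∨
        (a = c ∧ w = v) := by
  constructor
  · rintro ⟨_ | n, h⟩
    · simp_all
    · simp only [List.replicate_succ, List.cons_append, List.cons.injEq] at h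
      exact Or.inl ⟨h.1, n, h.2⟩
  · rintro (⟨rfl, n, rfl⟩ | ⟨rfl, rfl⟩)
    · exact ⟨n + 1, rfl⟩
    · exact ⟨0, rfl⟩

theorem replicateAppend_cons_leftQuotient_singleton [DecidableEq α] {x c : α} (hxc : x ≠ c)
    (v : List α) (a : α) :
    (replicateAppend x (c :: v)).leftQuotient [a] =
      if a = x then replicateAppend x (c :: v)
      else if a = c then {v} else 0 := by
  ext w
  rw [mem_leftQuotient, List.singleton_append, cons_mem_replicateAppend_cons]
  split_ifs with hx hc
  · simp [hx, hxc]
  · simp [hc, hxc.symm]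
  · simp [hx, hc]

theorem isRegular_replicateAppend_cons {x c : α} (hxc : x ≠ c) (v : List α) :
    (replicateAppend x (c :: v)).IsRegular := by
  classical
  refine isRegular_of_finite_of_leftQuotient_mem
    (((List.finite_toSet v.tails).image fun s => ({s} : Language α)).insert 0 |>.insert _)
    (Set.mem_insert _ _) ?_
  rintro M (rfl | rfl | ⟨s, hs, rfl⟩) a
  · rw [replicateAppend_cons_leftQuotient_singleton hxc]
    split_ifs
    · exact Set.mem_insert _ _
    · exact Or.inr (Or.inr ⟨v, by simp, rfl⟩)
    · exact Or.inr (Or.inl rfl)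
  · exact Or.inr (Or.inl rfl)
  · rcases s with _ | ⟨e, t⟩
    · rw [singleton_nil_leftQuotient_singleton]
      exact Or.inr (Or.inl rfl)
    · rw [singleton_cons_leftQuotient_singleton]
      split_ifs
      · exact Or.inr (Or.inr ⟨t, (List.mem_tails _ _).2 ((List.suffix_cons e t).trans
          ((List.mem_tails _ _).1 hs)), rfl⟩)
      · exact Or.inr (Or.inl rfl)

end Language

theorem exL1_isRegular : exL1.IsRegular :=
  (Language.isRegular_replicateAppend_cons (x := Letter.a) (c := .b) (by decide) [.a']).add
    (Language.isRegular_replicateAppend_cons (x := Letter.a) (c := .b') (by decide) [.a'])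

theorem exL2_isRegular : exL2.IsRegular := by
  convert (Language.isRegular_replicateAppend_cons (x := Letter.a') (c := .b) (by decide)
    [.a]).reverse using 1
  ext w
  simp only [exL2, Language.replicateAppend]
  refine exists_congr fun n => ?_
  rw [← List.reverse_inj]
  simp

section ovr

variable {σ : Type} (bar : σ → σ)

theorem ovr_append (u v : List σ) : ovr bar (u ++ v) = ovr bar v ++ ovr bar u := by
  simp [ovr]

@[simp]
theorem ovr_singleton (x : σ) : ovr bar [x] = [bar x] := rfl

theorem ovr_replicate (n : ℕ) (x : σ) :
    ovr bar (List.replicate n x) = List.replicate n (bar x) := by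
  simp [ovr]

theorem ovr_ovr {bar : σ → σ} (h : Function.Involutive bar) (w : List σ) :
    ovr bar (ovr bar w) = w := by
  simp [ovr, List.map_reverse, h.comp_self]

theorem mem_hairpinCompletion_one_iff (L1 L2 : Language σ) (π : List σ) :
    π ∈ hairpinCompletion bar 1 L1 L2 ↔ ∃ γ x β,
      π = γ ++ [x] ++ β ++ [bar x] ++ ovr bar γ ∧
      (γ ++ [x] ++ β ++ [bar x] ∈ L1 ∨ [x] ++ β ++ [bar x] ++ ovr bar γ ∈ L2) := by
  constructor
  · rintro ⟨γ, _ | ⟨x, α⟩, β, rfl, hα, h⟩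
    · simp at hα
    · refine ⟨γ, x, α ++ β ++ ovr bar α, ?_, ?_⟩ <;> simp_all [ovr]
  · rintro ⟨γ, x, β, rfl, h⟩
    exact ⟨γ, [x], β, rfl, le_rfl, h⟩

end ovr

theorem Letter.bar_involutive : Function.Involutive Letter.bar := fun x => by
  cases x <;> rfl

theorem eq_replicate_of_hairpin_eq_replicate_append {σ : Type} {bar : σ → σ} {γ β : List σ}
    {x a c d : σ} {n : ℕ} (hc : bar c ≠ d)
    (h : γ ++ [x] ++ β ++ [bar x] = List.replicate n a ++ [c, d]) :
    γ.length < n ∧ γ = List.replicate γ.length a := by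
  have hβ : β ≠ [] := by
    rintro rfl
    have h' : γ ++ [x, bar x] = List.replicate n a ++ [c, d] := by simpa using h
    obtain ⟨rfl, hxd⟩ : x = c ∧ bar x = d := by simpa using (List.append_inj' h' rfl).2
    exact hc hxd
  have hlen := congrArg List.length h
  simp only [List.length_append, List.length_replicate, List.length_cons,
    List.length_nil] at hlen
  have hγ : γ.length < n := by have := List.length_pos_of_ne_nil hβ; omega
  refine ⟨hγ, ?_⟩
  have := congrArg (List.take γ.length) h
  rw [List.append_assoc, List.append_assoc, List.take_left' rfl,
    List.take_append_of_le_length (by simpa using hγ.le), List.take_replicate,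
    min_eq_left hγ.le] at this
  exact this

def exHairpin : Language Letter :=
  { w | (∃ i j : ℕ, 1 ≤ i ∧ 1 ≤ j ∧
          w = List.replicate i .a ++ [.b] ++ List.replicate j .a') ∨
        (∃ i j : ℕ, 1 ≤ j ∧ j ≤ i ∧
          w = List.replicate i .a ++ [.b'] ++ List.replicate j .a') }

theorem mem_exHairpin_of_mem_exL1 {γ β : List Letter} {x : Letter}
    (h : γ ++ [x] ++ β ++ [x.bar] ∈ exL1) :
    γ ++ [x] ++ β ++ [x.bar] ++ ovr Letter.bar γ ∈ exHairpin := by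
  rcases h with ⟨n, hn⟩ | ⟨n, hn⟩ <;>
    obtain ⟨hlt, hγ⟩ := eq_replicate_of_hairpin_eq_replicate_append (by decide) hn <;>
    rw [hn, hγ, ovr_replicate]
  exacts [Or.inl ⟨n, γ.length + 1, by omega, by omega, by simp [Letter.bar, List.replicate_succ]⟩,
    Or.inr ⟨n, γ.length + 1, by omega, hlt, by simp [Letter.bar, List.replicate_succ]⟩]

theorem mem_exHairpin_of_mem_exL2 {γ β : List Letter} {x : Letter}
    (h : [x] ++ β ++ [x.bar] ++ ovr Letter.bar γ ∈ exL2) :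
    γ ++ [x] ++ β ++ [x.bar] ++ ovr Letter.bar γ ∈ exHairpin := by
  obtain ⟨n, hn⟩ := h
  have hn' : γ ++ [x] ++ ovr Letter.bar β ++ [x.bar] = List.replicate n .a ++ [.b', .a'] := by
    have := congrArg (ovr Letter.bar) hn
    simp only [ovr_append, ovr_ovr Letter.bar_involutive, ovr_replicate, ovr_singleton,
      Letter.bar_involutive x] at this
    simpa [ovr, Letter.bar] using this
  obtain ⟨hlt, hγ⟩ := eq_replicate_of_hairpin_eq_replicate_append (by decide) hn'
  rw [show γ ++ [x] ++ β ++ [x.bar] ++ ovr Letter.bar γ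
    = γ ++ ([x] ++ β ++ [x.bar] ++ ovr Letter.bar γ) by simp, hn, hγ]
  exact Or.inl ⟨γ.length + 1, n, by omega, by omega, by simp [List.replicate_succ']⟩

theorem replicate_append_replicate_succ_mem_hairpinCompletion {c : Letter}
    (hc : c = .b ∨ c = .b') {g n : ℕ} (hg : g < n) :
    List.replicate n .a ++ [c] ++ List.replicate (g + 1) .a' ∈
      hairpinCompletion Letter.bar 1 exL1 exL2 := by
  obtain ⟨k, rfl⟩ := Nat.exists_eq_add_of_lt hg
  have hw : List.replicate g .a ++ [.a] ++ (List.replicate k .a ++ [c]) ++ [Letter.a.bar] =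
      List.replicate (g + k + 1) .a ++ [c, .a'] := by
    simp [Letter.bar, List.replicate_add, List.replicate_succ, List.replicate_append_cons_self,
      -List.replicate_append_replicate]
  refine (mem_hairpinCompletion_one_iff _ _ _ _).2
    ⟨List.replicate g .a, .a, List.replicate k .a ++ [c], ?_, Or.inl ?_⟩
  · rw [hw, ovr_replicate]
    simp [Letter.bar, List.replicate_succ]
  · rcases hc with rfl | rfl
    exacts [Or.inl ⟨_, hw⟩, Or.inr ⟨_, hw⟩]

theorem replicate_succ_append_b_mem_hairpinCompletion {g n : ℕ} (hg : g < n) :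
    List.replicate (g + 1) .a ++ [.b] ++ List.replicate n .a' ∈
      hairpinCompletion Letter.bar 1 exL1 exL2 := by
  obtain ⟨k, rfl⟩ : ∃ k, n = k + g + 1 := ⟨n - g - 1, by omega⟩
  refine (mem_hairpinCompletion_one_iff _ _ _ _).2
    ⟨List.replicate g .a, .a, .b :: List.replicate k .a', ?_, Or.inr ⟨k + g + 1, ?_⟩⟩ <;>
  simp [ovr_replicate, Letter.bar, List.replicate_add, List.replicate_succ,
    List.replicate_append_cons_self, -List.replicate_append_replicate]

theorem hairpinCompletion_exL1_exL2 : hairpinCompletion Letter.bar 1 exL1 exL2 = exHairpin := by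
  ext π
  constructor
  · intro h
    obtain ⟨γ, x, β, rfl, h1 | h2⟩ := (mem_hairpinCompletion_one_iff _ _ _ _).1 h
    · exact mem_exHairpin_of_mem_exL1 h1
    · exact mem_exHairpin_of_mem_exL2 h2
  · rintro (⟨i, j, hi, hj, rfl⟩ | ⟨i, j, hj, hji, rfl⟩)
    · obtain ⟨g, rfl⟩ : ∃ g, j = g + 1 := ⟨j - 1, by omega⟩
      by_cases hji : g < i
      · exact replicate_append_replicate_succ_mem_hairpinCompletion (.inl rfl) hji
      · obtain ⟨g', rfl⟩ : ∃ g', i = g' + 1 := ⟨i - 1, by omega⟩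
        exact replicate_succ_append_b_mem_hairpinCompletion (by omega)
    · obtain ⟨g, rfl⟩ : ∃ g, j = g + 1 := ⟨j - 1, by omega⟩
      exact replicate_append_replicate_succ_mem_hairpinCompletion (.inr rfl) (by omega)

theorem replicate_append_b'_mem_exHairpin_iff {i j : ℕ} :
    List.replicate i .a ++ [.b'] ++ List.replicate j .a' ∈ exHairpin ↔ 1 ≤ j ∧ j ≤ i := by
  constructor
  · rintro (⟨i', j', -, -, h⟩ | ⟨i', j', hj, hji, h⟩) <;>
      simp only [List.append_assoc, List.singleton_append] at h <;>
      obtain ⟨rfl, hb, hj'⟩ := (List.replicate_append_cons_inj (by decide) (by decide)).1 h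
    · exact absurd hb (by decide)
    · exact List.replicate_left_inj.1 hj' ▸ ⟨hj, hji⟩
  · rintro ⟨hj, hji⟩
    exact Or.inr ⟨i, j, hj, hji, rfl⟩

theorem not_isRegular_exHairpin : ¬ exHairpin.IsRegular := by
  intro h
  have hinj : Function.Injective fun i => exHairpin.leftQuotient (List.replicate (i + 1) .a) := by
    have key : ∀ {i j : ℕ}, exHairpin.leftQuotient (List.replicate (i + 1) .a) =
        exHairpin.leftQuotient (List.replicate (j + 1) .a) → i ≤ j := by
      intro i j hij
      have hmem : [.b'] ++ List.replicate (i + 1) .a' ∈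
          exHairpin.leftQuotient (List.replicate (i + 1) .a) := by
        rw [Language.mem_leftQuotient, ← List.append_assoc, replicate_append_b'_mem_exHairpin_iff]
        omega
      rw [hij, Language.mem_leftQuotient, ← List.append_assoc,
        replicate_append_b'_mem_exHairpin_iff] at hmem
      omega
    exact fun i j hij => le_antisymm (key hij) (key hij.symm)
  exact Set.infinite_range_of_injective hinj
    (h.finite_range_leftQuotient.subset (Set.range_subset_iff.2 fun _ => Set.mem_range_self _))

theorem hairpin_completion_not_necessarily_regular :
    exL1.IsRegular ∧ exL2.IsRegular ∧
    hairpinCompletion Letter.bar 1 exL1 exL2 =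
      { w | (∃ i j : ℕ, 1 ≤ i ∧ 1 ≤ j ∧
            w = List.replicate i .a ++ [.b] ++ List.replicate j .a') ∨
          (∃ i j : ℕ, 1 ≤ j ∧ j ≤ i ∧
            w = List.replicate i .a ++ [.b'] ++ List.replicate j .a') } ∧
    ¬ (hairpinCompletion Letter.bar 1 exL1 exL2).IsRegular :=
  ⟨exL1_isRegular, exL2_isRegular, hairpinCompletion_exL1_exL2,
    hairpinCompletion_exL1_exL2 ▸ not_isRegular_exHairpin⟩
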